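/- For every additive shift space U ⊆ A^{ℤ²}, the rectangular entropy equals the genuinely two-dimensional entropy: h_r(U) = h(U), where h(U) = sup{h_Ω(U) : Ω is an expanding system of finite subsets of ℤ² with limsup_{n→∞} |∂Ω(n)|/|Ω(n)| = 0}. -/

import Mathlib

open Filter
open scoped Classical

/-- The `m × n` rectangular lattice `Z_{m×n}(p)` with bottom-left corner `p`. -/
def Zrect (m n : ℕ) (p : ℤ × ℤ) : Finset (ℤ × ℤ) :=
  (Finset.range m ×ˢ Finset.range n).image (fun ab => (p.1 + (ab.1 : ℤ), p.2 + (ab.2 : ℤ)))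

/-- The number of patterns of `U` seen on the finite window `L`. -/
noncomputable def patternCount {A : Type*} (U : Set ((ℤ × ℤ) → A)) (L : Finset (ℤ × ℤ)) : ℕ :=
  Set.ncard ((fun x => fun p : L => x (p : ℤ × ℤ)) '' U)

/-- An additive shift space: nonempty, closed, translation invariant. -/
def IsShiftSpace {A : Type*} [TopologicalSpace A] (U : Set ((ℤ × ℤ) → A)) : Prop :=
  U.Nonempty ∧ IsClosed U ∧ ∀ v : ℤ × ℤ, ∀ x ∈ U, (fun p => x (p + v)) ∈ U

/-- An expanding system of finite sublattices of `ℤ²`. -/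
def IsExpandingSystem (Ω : ℕ → Finset (ℤ × ℤ)) : Prop :=
  (∀ n, Ω n ⊂ Ω (n + 1)) ∧ ∀ p : ℤ × ℤ, ∃ n, p ∈ Ω n

/-- The interior of a finite lattice. -/
def latInterior (L : Finset (ℤ × ℤ)) : Finset (ℤ × ℤ) :=
  L.filter (fun p => (p.1 + 1, p.2) ∈ L ∧ (p.1, p.2 + 1) ∈ L ∧ (p.1 + 1, p.2 + 1) ∈ L)

/-- The boundary of a finite lattice. -/
def latBoundary (L : Finset (ℤ × ℤ)) : Finset (ℤ × ℤ) := L \ latInterior L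

/-- The rectangular entropy `h_r(U)`. -/
noncomputable def rectEntropy {A : Type*} (U : Set ((ℤ × ℤ) → A)) : ℝ :=
  ⨅ mn : ℕ × ℕ, (1 / (((mn.1 + 1) * (mn.2 + 1) : ℕ) : ℝ)) *
    Real.log (patternCount U (Zrect (mn.1 + 1) (mn.2 + 1) (0, 0)))

/-- The entropy `h_Ω(U)` along an expanding system `Ω`. -/
noncomputable def entropyAlong {A : Type*} (U : Set ((ℤ × ℤ) → A)) (Ω : ℕ → Finset (ℤ × ℤ)) : ℝ :=
  Filter.limsup (fun n => (1 / ((Ω n).card : ℝ)) * Real.log (patternCount U (Ω n))) Filter.atTop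

/-- `Ω_{k,l}(n)`: the union of grid rectangles `Z_{k×l}((ak,bl))` contained in `L`. -/
noncomputable def gridPart (k l : ℕ) (L : Finset (ℤ × ℤ)) : Finset (ℤ × ℤ) :=
  L.filter (fun p => ∃ a b : ℤ,
    p ∈ Zrect k l ((k : ℤ) * a, (l : ℤ) * b) ∧ Zrect k l ((k : ℤ) * a, (l : ℤ) * b) ⊆ L)

/-- `β_{k,l}` : the size of the complement of the grid part. -/
noncomputable def betaKL (k l : ℕ) (L : Finset (ℤ × ℤ)) : ℕ := (L \ gridPart k l L).card

/-- `α_{k,l}` : the number of grid rectangles contained in `L`. -/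
noncomputable def alphaKL (k l : ℕ) (L : Finset (ℤ × ℤ)) : ℕ :=
  Set.ncard {ab : ℤ × ℤ | Zrect k l ((k : ℤ) * ab.1, (l : ℤ) * ab.2) ⊆ L}

/-- A tessellation of `ℤ²`. -/
def IsTessellation (T : Finset (ℤ × ℤ)) : Prop :=
  ∃ v : ℕ → ℤ × ℤ,
    (∀ i j : ℕ, i ≠ j → Disjoint (T.image (· + v i)) (T.image (· + v j))) ∧
    ∀ p : ℤ × ℤ, ∃ i : ℕ, p ∈ T.image (· + v i)

/-- Euclidean distance between points of `ℤ²`. -/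
noncomputable def euclDist (p q : ℤ × ℤ) : ℝ :=
  Real.sqrt (((p.1 - q.1 : ℤ) : ℝ) ^ 2 + ((p.2 - q.2 : ℤ) : ℝ) ^ 2)

/-- Block gluing with gap `M`. -/
def BlockGluingWithGap {A : Type*} (U : Set ((ℤ × ℤ) → A)) (M : ℕ) : Prop :=
  ∀ (m₁ n₁ m₂ n₂ : ℕ) (c₁ c₂ : ℤ × ℤ),
    (∀ p ∈ Zrect m₁ n₁ c₁, ∀ q ∈ Zrect m₂ n₂ c₂, (M : ℝ) ≤ euclDist p q) →
    ∀ x₁ ∈ U, ∀ x₂ ∈ U, ∃ x ∈ U,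
      (∀ p ∈ Zrect m₁ n₁ c₁, x p = x₁ p) ∧ ∀ q ∈ Zrect m₂ n₂ c₂, x q = x₂ q

/-- Block gluing. -/
def IsBlockGluing {A : Type*} (U : Set ((ℤ × ℤ) → A)) : Prop :=
  ∃ M : ℕ, 1 ≤ M ∧ BlockGluingWithGap U M

/-- A full shift on a sub-alphabet. -/
def IsFullShift {A : Type*} (U : Set ((ℤ × ℤ) → A)) : Prop :=
  ∃ B : Set A, U = {x | ∀ p : ℤ × ℤ, x p ∈ B}

/-- Shift of finite type. -/
def IsSFT {A : Type*} (U : Set ((ℤ × ℤ) → A)) : Prop :=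
  ∃ (F : Finset (ℤ × ℤ)) (P : Set (F → A)),
    U = {x | ∀ v : ℤ × ℤ, (fun p : F => x (v + (p : ℤ × ℤ))) ∈ P}

/-- `(i,j)` has horizontal length `m` in `L`. -/
def HasHorizLength (L : Finset (ℤ × ℤ)) (p : ℤ × ℤ) (m : ℕ) : Prop :=
  1 ≤ m ∧ (∃ c : ℤ × ℤ, p ∈ Zrect m 1 c ∧ Zrect m 1 c ⊆ L) ∧
    ∀ m' : ℕ, m < m' → ¬ ∃ c : ℤ × ℤ, p ∈ Zrect m' 1 c ∧ Zrect m' 1 c ⊆ L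

/-- `(i,j)` has vertical length `m` in `L`. -/
def HasVertLength (L : Finset (ℤ × ℤ)) (p : ℤ × ℤ) (m : ℕ) : Prop :=
  1 ≤ m ∧ (∃ c : ℤ × ℤ, p ∈ Zrect 1 m c ∧ Zrect 1 m c ⊆ L) ∧
    ∀ m' : ℕ, m < m' → ¬ ∃ c : ℤ × ℤ, p ∈ Zrect 1 m' c ∧ Zrect 1 m' c ⊆ L

noncomputable def betaHoriz (m : ℕ) (L : Finset (ℤ × ℤ)) : ℕ :=
  (L.filter (fun p => HasHorizLength L p m)).card

noncomputable def betaVert (m : ℕ) (L : Finset (ℤ × ℤ)) : ℕ :=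
  (L.filter (fun p => HasVertLength L p m)).card

/-- The one-dimensional sublattice segment `{s • v : 0 ≤ s ≤ n-1}`. -/
def lineSegment (v : ℤ × ℤ) (n : ℕ) : Finset (ℤ × ℤ) :=
  (Finset.range n).image (fun s : ℕ => ((s : ℤ) * v.1, (s : ℤ) * v.2))

/-- The projectional entropy along the one-dimensional sublattice generated by `v`. -/
noncomputable def projEntropy {A : Type*} (U : Set ((ℤ × ℤ) → A)) (v : ℤ × ℤ) : ℝ :=
  ⨅ n : ℕ, (1 / (n + 1 : ℝ)) * Real.log (patternCount U (lineSegment v (n + 1)))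

/-- `ĥ⁽¹⁾(U)`: supremum of projectional entropies over one-dimensional sublattices. -/
noncomputable def hHatOne {A : Type*} (U : Set ((ℤ × ℤ) → A)) : ℝ :=
  ⨆ v : {w : ℤ × ℤ // w ≠ 0}, projEntropy U (v : ℤ × ℤ)

/-- The horizontal golden-mean shift. -/
def goldenMeanShift : Set ((ℤ × ℤ) → Fin 2) :=
  {x | ∀ p : ℤ × ℤ, x p * x (p.1 + 1, p.2) = 0}

/-- The sequence `a_k`: `a_1 = 2`, `a_2 = 3`, `a_k = a_{k-1} + a_{k-2}`. -/
def aSeq : ℕ → ℕ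
  | 0 => 1
  | 1 => 2
  | (k + 2) => aSeq (k + 1) + aSeq k


/-!
Cut `ℤ²` into the grid of `k × l` rectangles. The grid rectangles lying inside a finite window `L`
carry at most `Γ_{k×l}(U)` patterns each, and every other point of `L` lies in a grid rectangle
that also contains a point of `L` with a lattice neighbour outside `L`. Along each row and column
the runs of `L` have as many starts as ends, and run ends lie in `∂L`, so there are at most
`4 |∂L|` such points. Hence `log Γ(L,U) / |L| ≤ log Γ_{k×l}(U) / (kl) + 4kl log N · |∂L| / |L|`,
which gives `h_Ω(U) ≤ h_r(U)` for every genuinely two-dimensional `Ω`; centred squares attain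
`h_r(U)`.
-/

section Rectangles

lemma mem_Zrect {k l : ℕ} {c p : ℤ × ℤ} :
    p ∈ Zrect k l c ↔ c.1 ≤ p.1 ∧ p.1 < c.1 + k ∧ c.2 ≤ p.2 ∧ p.2 < c.2 + l := by
  simp only [Zrect, Finset.mem_image, Finset.mem_product, Finset.mem_range, Prod.exists]
  constructor
  · rintro ⟨a, b, ⟨ha, hb⟩, rfl⟩
    simp only
    omega
  · rintro ⟨h1, h2, h3, h4⟩
    exact ⟨(p.1 - c.1).toNat, (p.2 - c.2).toNat, ⟨by omega, by omega⟩, by ext <;> simp only [Int.ofNat_toNat] <;> omega⟩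

lemma card_Zrect (k l : ℕ) (c : ℤ × ℤ) : (Zrect k l c).card = k * l := by
  rw [Zrect, Finset.card_image_of_injective, Finset.card_product, Finset.card_range,
    Finset.card_range]
  intro a b hab
  simp only [Prod.ext_iff, add_right_inj, Nat.cast_inj] at hab
  exact Prod.ext hab.1 hab.2

lemma Zrect_image_add (k l : ℕ) (c v : ℤ × ℤ) :
    (Zrect k l c).image (· + v) = Zrect k l (c + v) := by
  ext p
  simp only [Finset.mem_image]
  constructor
  · rintro ⟨q, hq, rfl⟩
    rw [mem_Zrect] at hq ⊢
    simp only [Prod.fst_add, Prod.snd_add]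
    omega
  · intro hp
    rw [mem_Zrect, Prod.fst_add, Prod.snd_add] at hp
    refine ⟨p - v, mem_Zrect.2 ?_, sub_add_cancel p v⟩
    simp only [Prod.fst_sub, Prod.snd_sub]
    omega

lemma card_latBoundary_Zrect_le (k l : ℕ) (c : ℤ × ℤ) :
    (latBoundary (Zrect (k + 1) (l + 1) c)).card ≤ k + l + 1 := by
  have hsub : Zrect k l c ⊆ latInterior (Zrect (k + 1) (l + 1) c) := by
    intro p hp
    rw [mem_Zrect] at hp
    simp only [latInterior, Finset.mem_filter, mem_Zrect]
    push_cast
    omega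
  have hZ : Zrect k l c ⊆ Zrect (k + 1) (l + 1) c :=
    hsub.trans (Finset.filter_subset _ _)
  calc (latBoundary (Zrect (k + 1) (l + 1) c)).card
      ≤ (Zrect (k + 1) (l + 1) c \ Zrect k l c).card :=
        Finset.card_le_card (Finset.sdiff_subset_sdiff le_rfl hsub)
    _ = (k + 1) * (l + 1) - k * l := by
        rw [Finset.card_sdiff_of_subset hZ, card_Zrect, card_Zrect]
    _ = k + l + 1 := by
        rw [show (k + 1) * (l + 1) = k * l + (k + l + 1) by ring]
        omega

end Rectangles

section Exits

def unitSteps : Finset (ℤ × ℤ) := {(1, 0), (0, 1), (-1, 0), (0, -1)}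

def exitSet (L : Finset (ℤ × ℤ)) (e : ℤ × ℤ) : Finset (ℤ × ℤ) := L.filter (fun r => r + e ∉ L)

/-- Starts and ends of runs in direction `e` are equinumerous: `L \ (L + e)` and `(L + e) \ L`
have the same size because `L` and `L + e` do. -/
lemma card_exitSet_neg (L : Finset (ℤ × ℤ)) (e : ℤ × ℤ) :
    (exitSet L (-e)).card = (exitSet L e).card := by
  set M := L.map (Equiv.addRight e).toEmbedding
  have hstart : exitSet L (-e) = L \ M := by
    ext r
    simp [exitSet, M, Finset.mem_map_equiv]
  have hend : (exitSet L e).map (Equiv.addRight e).toEmbedding = M \ L := by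
    ext r
    simp [exitSet, M, Finset.mem_map_equiv]
  rw [hstart, Finset.card_sdiff_comm (Finset.card_map _).symm, ← hend, Finset.card_map]

lemma exitSet_right_subset_latBoundary (L : Finset (ℤ × ℤ)) :
    exitSet L (1, 0) ⊆ latBoundary L := by
  rintro ⟨i, j⟩ hr
  simp only [exitSet, Finset.mem_filter, Prod.mk_add_mk, add_zero] at hr
  simp only [latBoundary, latInterior, Finset.mem_sdiff, Finset.mem_filter]
  tauto

lemma exitSet_up_subset_latBoundary (L : Finset (ℤ × ℤ)) :
    exitSet L (0, 1) ⊆ latBoundary L := by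
  rintro ⟨i, j⟩ hr
  simp only [exitSet, Finset.mem_filter, Prod.mk_add_mk, add_zero] at hr
  simp only [latBoundary, latInterior, Finset.mem_sdiff, Finset.mem_filter]
  tauto

lemma card_biUnion_exitSet_le (L : Finset (ℤ × ℤ)) :
    (unitSteps.biUnion (exitSet L)).card ≤ 4 * (latBoundary L).card := by
  have hleft := card_exitSet_neg L (1, 0)
  have hdown := card_exitSet_neg L (0, 1)
  simp only [Prod.neg_mk, neg_zero] at hleft hdown
  have hright := Finset.card_le_card (exitSet_right_subset_latBoundary L)
  have hup := Finset.card_le_card (exitSet_up_subset_latBoundary L)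
  calc (unitSteps.biUnion (exitSet L)).card ≤ ∑ e ∈ unitSteps, (exitSet L e).card :=
        Finset.card_biUnion_le
    _ = (exitSet L (1, 0)).card + ((exitSet L (0, 1)).card +
          ((exitSet L (1, 0)).card + (exitSet L (0, 1)).card)) := by
        simp [unitSteps, hleft, hdown]
    _ ≤ 4 * (latBoundary L).card := by omega

lemma exists_step_toward {k l : ℕ} {c r q : ℤ × ℤ} (hr : r ∈ Zrect k l c)
    (hq : q ∈ Zrect k l c) (hrq : r ≠ q) :
    ∃ e ∈ unitSteps, r + e ∈ Zrect k l c ∧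
      (r.1 + e.1 - q.1).natAbs + (r.2 + e.2 - q.2).natAbs <
        (r.1 - q.1).natAbs + (r.2 - q.2).natAbs := by
  rw [mem_Zrect] at hr hq
  simp only [unitSteps, Finset.mem_insert, Finset.mem_singleton, mem_Zrect, Prod.fst_add,
    Prod.snd_add]
  have hdiff : r.1 ≠ q.1 ∨ r.2 ≠ q.2 := by
    by_contra! h
    exact hrq (Prod.ext h.1 h.2)
  rcases lt_trichotomy r.1 q.1 with h1 | h1 | h1
  · exact ⟨(1, 0), by simp, by simp only; omega⟩
  · rcases lt_trichotomy r.2 q.2 with h2 | h2 | h2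
    · exact ⟨(0, 1), by simp, by simp only; omega⟩
    · omega
    · exact ⟨(0, -1), by simp, by simp only; omega⟩
  · exact ⟨(-1, 0), by simp, by simp only; omega⟩

lemma exists_mem_exitSet_of_mem_of_not_mem {L : Finset (ℤ × ℤ)} {k l : ℕ} {c p q : ℤ × ℤ}
    (hp : p ∈ Zrect k l c) (hpL : p ∈ L) (hq : q ∈ Zrect k l c) (hqL : q ∉ L) :
    ∃ r ∈ Zrect k l c, r ∈ unitSteps.biUnion (exitSet L) := by
  obtain ⟨r, hr, hmin⟩ := ((Zrect k l c).filter (· ∈ L)).exists_min_image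
    (fun r => (r.1 - q.1).natAbs + (r.2 - q.2).natAbs) ⟨p, Finset.mem_filter.2 ⟨hp, hpL⟩⟩
  rw [Finset.mem_filter] at hr
  obtain ⟨e, he, hre, hcloser⟩ := exists_step_toward hr.1 hq (ne_of_mem_of_not_mem hr.2 hqL)
  refine ⟨r, hr.1, Finset.mem_biUnion.2 ⟨e, he, Finset.mem_filter.2 ⟨hr.2, fun hreL => ?_⟩⟩⟩
  exact (hmin _ (Finset.mem_filter.2 ⟨hre, hreL⟩)).not_gt hcloser

end Exits

section Grid

variable {k l : ℕ}

def blockOf (k l : ℕ) (ab : ℤ × ℤ) : Finset (ℤ × ℤ) :=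
  Zrect k l ((k : ℤ) * ab.1, (l : ℤ) * ab.2)

def blockIdx (k l : ℕ) (p : ℤ × ℤ) : ℤ × ℤ := (p.1 / k, p.2 / l)

lemma mem_blockOf_iff (hk : 0 < k) (hl : 0 < l) {ab p : ℤ × ℤ} :
    p ∈ blockOf k l ab ↔ blockIdx k l p = ab := by
  simp only [blockOf, mem_Zrect, blockIdx, Prod.ext_iff,
    Int.ediv_eq_iff_of_pos (Int.natCast_pos.2 hk), Int.ediv_eq_iff_of_pos (Int.natCast_pos.2 hl),
    mul_comm, and_assoc]

lemma mem_blockOf_blockIdx (hk : 0 < k) (hl : 0 < l) (p : ℤ × ℤ) :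
    p ∈ blockOf k l (blockIdx k l p) :=
  (mem_blockOf_iff hk hl).2 rfl

def goodBlocks (k l : ℕ) (L : Finset (ℤ × ℤ)) : Finset (ℤ × ℤ) :=
  (L.image (blockIdx k l)).filter (fun ab => blockOf k l ab ⊆ L)

lemma mem_goodBlocks (hk : 0 < k) (hl : 0 < l) {L : Finset (ℤ × ℤ)} {ab : ℤ × ℤ} :
    ab ∈ goodBlocks k l L ↔ blockOf k l ab ⊆ L := by
  refine ⟨fun h => (Finset.mem_filter.1 h).2, fun hsub => Finset.mem_filter.2 ⟨?_, hsub⟩⟩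
  have hcorner : ((k : ℤ) * ab.1, (l : ℤ) * ab.2) ∈ blockOf k l ab := by
    rw [blockOf, mem_Zrect]
    omega
  exact Finset.mem_image.2 ⟨_, hsub hcorner, (mem_blockOf_iff hk hl).1 hcorner⟩

lemma alphaKL_eq_card_goodBlocks (hk : 0 < k) (hl : 0 < l) (L : Finset (ℤ × ℤ)) :
    alphaKL k l L = (goodBlocks k l L).card := by
  rw [alphaKL, ← Set.ncard_coe_finset]
  congr 1
  ext ab
  exact (mem_goodBlocks hk hl).symm

lemma gridPart_eq_biUnion (hk : 0 < k) (hl : 0 < l) (L : Finset (ℤ × ℤ)) :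
    gridPart k l L = (goodBlocks k l L).biUnion (blockOf k l) := by
  ext p
  simp only [gridPart, Finset.mem_filter, Finset.mem_biUnion, mem_goodBlocks hk hl]
  constructor
  · rintro ⟨-, a, b, hp, hsub⟩
    exact ⟨(a, b), hsub, hp⟩
  · rintro ⟨ab, hsub, hp⟩
    exact ⟨hsub hp, ab.1, ab.2, hp, hsub⟩

lemma alphaKL_mul_le_card (hk : 0 < k) (hl : 0 < l) (L : Finset (ℤ × ℤ)) :
    alphaKL k l L * (k * l) ≤ L.card := by
  have hdisj : (goodBlocks k l L : Set (ℤ × ℤ)).PairwiseDisjoint (blockOf k l) := by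
    intro ab _ ab' _ hne
    refine Finset.disjoint_left.2 fun p hp hp' => hne ?_
    rw [mem_blockOf_iff hk hl] at hp hp'
    exact hp.symm.trans hp'
  calc alphaKL k l L * (k * l) = (gridPart k l L).card := by
        simp only [gridPart_eq_biUnion hk hl, Finset.card_biUnion hdisj, blockOf, card_Zrect,
          Finset.sum_const, smul_eq_mul, alphaKL_eq_card_goodBlocks hk hl]
    _ ≤ L.card := Finset.card_le_card (Finset.filter_subset _ _)

lemma betaKL_le (hk : 0 < k) (hl : 0 < l) (L : Finset (ℤ × ℤ)) :
    betaKL k l L ≤ k * l * (4 * (latBoundary L).card) := by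
  set E := unitSteps.biUnion (exitSet L)
  have hcover : L \ gridPart k l L ⊆ E.biUnion (fun r => blockOf k l (blockIdx k l r)) := by
    intro p hp
    obtain ⟨hpL, hpG⟩ := Finset.mem_sdiff.1 hp
    have hpB := mem_blockOf_blockIdx hk hl p
    obtain ⟨q, hqB, hqL⟩ := Finset.not_subset.1 fun hsub =>
      hpG (Finset.mem_filter.2 ⟨hpL, _, _, hpB, hsub⟩)
    obtain ⟨r, hrB, hrE⟩ := exists_mem_exitSet_of_mem_of_not_mem hpB hpL hqB hqL
    refine Finset.mem_biUnion.2 ⟨r, hrE, ?_⟩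
    rwa [(mem_blockOf_iff hk hl).1 hrB]
  calc betaKL k l L ≤ ∑ r ∈ E, (blockOf k l (blockIdx k l r)).card :=
        (Finset.card_le_card hcover).trans Finset.card_biUnion_le
    _ = k * l * E.card := by simp [blockOf, card_Zrect, mul_comm]
    _ ≤ k * l * (4 * (latBoundary L).card) := Nat.mul_le_mul_left _ (card_biUnion_exitSet_le L)

end Grid

section Patterns

def IsShiftInvariant {A : Type*} (U : Set ((ℤ × ℤ) → A)) : Prop :=
  ∀ v : ℤ × ℤ, ∀ x ∈ U, (fun p => x (p + v)) ∈ U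

variable {A : Type*} [Finite A] {U : Set ((ℤ × ℤ) → A)}

lemma one_le_patternCount (hne : U.Nonempty) (L : Finset (ℤ × ℤ)) : 1 ≤ patternCount U L :=
  (Set.ncard_pos (Set.toFinite _)).2 (hne.image _)

lemma patternCount_le_card_pow (U : Set ((ℤ × ℤ) → A)) (L : Finset (ℤ × ℤ)) :
    patternCount U L ≤ Nat.card A ^ L.card := by
  calc patternCount U L ≤ (Set.univ : Set (L → A)).ncard :=
        Set.ncard_le_ncard (Set.subset_univ _)
    _ = Nat.card A ^ L.card := by
        rw [Set.ncard_univ, Nat.card_fun, Nat.card_eq_finsetCard]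

lemma patternCount_union_le (U : Set ((ℤ × ℤ) → A)) (L M : Finset (ℤ × ℤ)) :
    patternCount U (L ∪ M) ≤ patternCount U L * patternCount U M := by
  let split : (↥(L ∪ M) → A) → (L → A) × (M → A) := fun g =>
    (fun p => g ⟨p, Finset.mem_union_left _ p.2⟩, fun p => g ⟨p, Finset.mem_union_right _ p.2⟩)
  rw [patternCount, patternCount, patternCount, ← Set.ncard_prod]
  refine Set.ncard_le_ncard_of_injOn split ?_ ?_ (Set.toFinite _)
  · rintro _ ⟨x, hx, rfl⟩
    exact ⟨⟨x, hx, rfl⟩, ⟨x, hx, rfl⟩⟩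
  · intro g _ g' _ h
    funext ⟨p, hp⟩
    rcases Finset.mem_union.1 hp with hpL | hpM
    · exact congrFun (congrArg Prod.fst h) ⟨p, hpL⟩
    · exact congrFun (congrArg Prod.snd h) ⟨p, hpM⟩

lemma patternCount_biUnion_le {ι : Type*} [DecidableEq ι] (U : Set ((ℤ × ℤ) → A))
    (s : Finset ι) (f : ι → Finset (ℤ × ℤ)) :
    patternCount U (s.biUnion f) ≤ ∏ i ∈ s, patternCount U (f i) := by
  induction s using Finset.induction_on with
  | empty => simpa using patternCount_le_card_pow U ∅
  | insert i s hi ih =>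
    rw [Finset.biUnion_insert, Finset.prod_insert hi]
    exact (patternCount_union_le U _ _).trans (Nat.mul_le_mul_left _ ih)

lemma patternCount_image_add_le (hinv : IsShiftInvariant U) (L : Finset (ℤ × ℤ)) (v : ℤ × ℤ) :
    patternCount U (L.image (· + v)) ≤ patternCount U L := by
  refine Set.ncard_le_ncard_of_injOn
    (fun g p => g ⟨p + v, Finset.mem_image_of_mem _ p.2⟩) ?_ ?_ (Set.toFinite _)
  · rintro _ ⟨x, hx, rfl⟩
    exact ⟨_, hinv v x hx, rfl⟩
  · intro g _ g' _ h
    funext ⟨q, hq⟩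
    obtain ⟨p, hp, rfl⟩ := Finset.mem_image.1 hq
    exact congrFun h ⟨p, hp⟩

lemma patternCount_image_add (hinv : IsShiftInvariant U) (L : Finset (ℤ × ℤ)) (v : ℤ × ℤ) :
    patternCount U (L.image (· + v)) = patternCount U L := by
  refine le_antisymm (patternCount_image_add_le hinv L v) ?_
  calc patternCount U L = patternCount U ((L.image (· + v)).image (· + -v)) := by
        rw [Finset.image_image, show (· + -v) ∘ (· + v) = id from
          funext fun p => add_neg_cancel_right p v, Finset.image_id]
    _ ≤ patternCount U (L.image (· + v)) := patternCount_image_add_le hinv _ _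

lemma patternCount_Zrect (hinv : IsShiftInvariant U) (k l : ℕ) (c : ℤ × ℤ) :
    patternCount U (Zrect k l c) = patternCount U (Zrect k l (0, 0)) := by
  rw [← patternCount_image_add hinv (Zrect k l (0, 0)) c, Zrect_image_add, Prod.mk_add_mk,
    zero_add, zero_add]

lemma patternCount_le_grid (hinv : IsShiftInvariant U) {k l : ℕ} (hk : 0 < k) (hl : 0 < l)
    (L : Finset (ℤ × ℤ)) :
    patternCount U L ≤
      patternCount U (Zrect k l (0, 0)) ^ alphaKL k l L * Nat.card A ^ betaKL k l L := by
  have hsplit : L = (L \ gridPart k l L) ∪ gridPart k l L :=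
    (Finset.sdiff_union_of_subset (Finset.filter_subset _ _)).symm
  calc patternCount U L
      ≤ patternCount U (L \ gridPart k l L) * patternCount U (gridPart k l L) := by
        conv_lhs => rw [hsplit]
        exact patternCount_union_le U _ _
    _ ≤ Nat.card A ^ betaKL k l L * patternCount U (Zrect k l (0, 0)) ^ alphaKL k l L := by
        refine Nat.mul_le_mul (patternCount_le_card_pow U _) ?_
        rw [gridPart_eq_biUnion hk hl, alphaKL_eq_card_goodBlocks hk hl, ← Finset.prod_const]
        refine (patternCount_biUnion_le U _ _).trans (le_of_eq (Finset.prod_congr rfl ?_))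
        exact fun ab _ => patternCount_Zrect hinv k l _
    _ = _ := Nat.mul_comm _ _

end Patterns

section Entropy

noncomputable def patternEntropy {A : Type*} (U : Set ((ℤ × ℤ) → A)) (L : Finset (ℤ × ℤ)) : ℝ :=
  (1 / (L.card : ℝ)) * Real.log (patternCount U L)

lemma rectEntropy_eq_iInf_patternEntropy {A : Type*} (U : Set ((ℤ × ℤ) → A)) :
    rectEntropy U = ⨅ mn : ℕ × ℕ, patternEntropy U (Zrect (mn.1 + 1) (mn.2 + 1) (0, 0)) := by
  simp only [rectEntropy, patternEntropy, card_Zrect]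

variable {A : Type*} [Finite A] {U : Set ((ℤ × ℤ) → A)}

lemma log_patternCount_nonneg (hne : U.Nonempty) (L : Finset (ℤ × ℤ)) :
    0 ≤ Real.log (patternCount U L) :=
  Real.log_nonneg (by exact_mod_cast one_le_patternCount hne L)

lemma patternEntropy_nonneg (hne : U.Nonempty) (L : Finset (ℤ × ℤ)) : 0 ≤ patternEntropy U L :=
  mul_nonneg (by positivity) (log_patternCount_nonneg hne L)

lemma patternEntropy_le_log_card (hne : U.Nonempty) (L : Finset (ℤ × ℤ)) :
    patternEntropy U L ≤ Real.log (Nat.card A) := by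
  have hpos : (0 : ℝ) < patternCount U L := by exact_mod_cast one_le_patternCount hne L
  have hlog : Real.log (patternCount U L) ≤ L.card * Real.log (Nat.card A) := by
    rw [← Real.log_pow]
    exact Real.log_le_log hpos (by exact_mod_cast patternCount_le_card_pow U L)
  rcases L.eq_empty_or_nonempty with rfl | hL
  · simpa [patternEntropy] using Real.log_natCast_nonneg _
  · rw [patternEntropy, one_div_mul_eq_div, div_le_iff₀' (by exact_mod_cast hL.card_pos)]
    exact hlog

lemma rectEntropy_le_patternEntropy_Zrect (hne : U.Nonempty) (hinv : IsShiftInvariant U)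
    (k l : ℕ) (c : ℤ × ℤ) : rectEntropy U ≤ patternEntropy U (Zrect (k + 1) (l + 1) c) := by
  rw [rectEntropy_eq_iInf_patternEntropy, patternEntropy, patternCount_Zrect hinv, card_Zrect,
    ← card_Zrect (k + 1) (l + 1) (0, 0)]
  exact ciInf_le ⟨0, by rintro _ ⟨mn, rfl⟩; exact patternEntropy_nonneg hne _⟩ (k, l)

lemma log_patternCount_le_grid (hne : U.Nonempty) (hinv : IsShiftInvariant U)
    {k l : ℕ} (hk : 0 < k) (hl : 0 < l) (L : Finset (ℤ × ℤ)) :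
    Real.log (patternCount U L) ≤ alphaKL k l L * Real.log (patternCount U (Zrect k l (0, 0))) +
      betaKL k l L * Real.log (Nat.card A) := by
  have : Nonempty A := ⟨hne.some 0⟩
  have hpos : (0 : ℝ) < patternCount U L := by exact_mod_cast one_le_patternCount hne L
  have hΓ : (0 : ℝ) < patternCount U (Zrect k l (0, 0)) := by
    exact_mod_cast one_le_patternCount hne _
  have hN : (0 : ℝ) < Nat.card A := by exact_mod_cast Nat.card_pos
  have hgrid : (patternCount U L : ℝ) ≤ (patternCount U (Zrect k l (0, 0)) : ℝ) ^ alphaKL k l L *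
      (Nat.card A : ℝ) ^ betaKL k l L := by
    exact_mod_cast patternCount_le_grid hinv hk hl L
  rw [← Real.log_pow, ← Real.log_pow, ← Real.log_mul (pow_pos hΓ _).ne' (pow_pos hN _).ne']
  exact Real.log_le_log hpos hgrid

lemma patternEntropy_le_add_latBoundary (hne : U.Nonempty) (hinv : IsShiftInvariant U)
    {k l : ℕ} (hk : 0 < k) (hl : 0 < l) (L : Finset (ℤ × ℤ)) :
    patternEntropy U L ≤ patternEntropy U (Zrect k l (0, 0)) +
      4 * k * l * Real.log (Nat.card A) * ((latBoundary L).card / L.card) := by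
  rcases L.eq_empty_or_nonempty with rfl | hL
  · simpa [patternEntropy] using patternEntropy_nonneg hne (Zrect k l (0, 0))
  set X := Real.log (patternCount U (Zrect k l (0, 0)))
  set Y := Real.log (Nat.card A)
  have hX : 0 ≤ X := log_patternCount_nonneg hne _
  have hY : 0 ≤ Y := Real.log_natCast_nonneg _
  have hL0 : (0 : ℝ) < L.card := by exact_mod_cast hL.card_pos
  have hkl : (0 : ℝ) < k * l := by positivity
  have hlog := log_patternCount_le_grid hne hinv hk hl L
  have hα : (alphaKL k l L : ℝ) / L.card ≤ 1 / (k * l) := by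
    rw [div_le_div_iff₀ hL0 hkl, one_mul]
    exact_mod_cast alphaKL_mul_le_card hk hl L
  have hβ : (betaKL k l L : ℝ) ≤ k * l * (4 * (latBoundary L).card) := by
    exact_mod_cast betaKL_le hk hl L
  calc patternEntropy U L ≤ (1 / L.card) * (alphaKL k l L * X + betaKL k l L * Y) :=
        mul_le_mul_of_nonneg_left hlog (by positivity)
    _ = (alphaKL k l L / L.card) * X + (betaKL k l L / L.card) * Y := by ring
    _ ≤ 1 / (k * l) * X + (k * l * (4 * (latBoundary L).card) / L.card) * Y := by gcongr
    _ = _ := by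
        rw [patternEntropy, card_Zrect]
        push_cast
        ring

end Entropy

lemma limsup_le_of_le_add_mul {ι : Type*} {F : Filter ι} [F.NeBot] {u r : ι → ℝ} {g C : ℝ}
    (hle : ∀ i, u i ≤ g + C * r i) (hC : 0 ≤ C) (hu : IsCoboundedUnder (· ≤ ·) F u)
    (hr : IsBoundedUnder (· ≤ ·) F r) (hr' : IsCoboundedUnder (· ≤ ·) F r)
    (hr0 : limsup r F = 0) : limsup u F ≤ g := by
  have hmono : Monotone (fun t => g + C * t) := fun a b hab => by dsimp only; gcongr
  have hmap := hmono.map_limsup_of_continuousAt r (by fun_prop) hr hr'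
  calc limsup u F ≤ limsup ((fun t => g + C * t) ∘ r) F :=
        limsup_le_limsup (Eventually.of_forall hle) hu (hr.comp fun _ _ h => hmono h)
    _ = g := by rw [← hmap, hr0, mul_zero, add_zero]

section MainInequalities

variable {A : Type*} [Finite A] {U : Set ((ℤ × ℤ) → A)}

lemma entropyAlong_le_rectEntropy (hne : U.Nonempty) (hinv : IsShiftInvariant U)
    {Ω : ℕ → Finset (ℤ × ℤ)}
    (hΩ : limsup (fun n => ((latBoundary (Ω n)).card : ℝ) / ((Ω n).card : ℝ)) atTop = 0) :
    entropyAlong U Ω ≤ rectEntropy U := by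
  rw [rectEntropy_eq_iInf_patternEntropy]
  refine le_ciInf fun mn => limsup_le_of_le_add_mul
    (fun n => patternEntropy_le_add_latBoundary hne hinv mn.1.succ_pos mn.2.succ_pos (Ω n))
    (by positivity) (isCoboundedUnder_le_of_le atTop fun n => patternEntropy_nonneg hne _)
    (isBoundedUnder_of ⟨1, fun n => div_le_one_of_le₀ ?_ (by positivity)⟩)
    (isCoboundedUnder_le_of_le atTop fun n => by positivity) hΩ
  exact_mod_cast Finset.card_le_card Finset.sdiff_subset

def centeredSquare (n : ℕ) : Finset (ℤ × ℤ) := Zrect (2 * n + 1) (2 * n + 1) (-n, -n)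

lemma mem_centeredSquare {n : ℕ} {p : ℤ × ℤ} :
    p ∈ centeredSquare n ↔ -(n : ℤ) ≤ p.1 ∧ p.1 ≤ n ∧ -(n : ℤ) ≤ p.2 ∧ p.2 ≤ n := by
  rw [centeredSquare, mem_Zrect]
  omega

lemma isExpandingSystem_centeredSquare : IsExpandingSystem centeredSquare := by
  refine ⟨fun n => Finset.ssubset_iff_of_subset (fun p hp => ?_) |>.2 ?_, fun p => ?_⟩
  · rw [mem_centeredSquare] at hp ⊢
    push_cast
    omega
  · exact ⟨((n : ℤ) + 1, 0), mem_centeredSquare.2 (by push_cast; omega),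
      fun h => by have := mem_centeredSquare.1 h; omega⟩
  · exact ⟨p.1.natAbs + p.2.natAbs, mem_centeredSquare.2 (by omega)⟩

lemma tendsto_card_latBoundary_div_card_centeredSquare :
    Tendsto (fun n => ((latBoundary (centeredSquare n)).card : ℝ) / (centeredSquare n).card)
      atTop (nhds 0) := by
  refine squeeze_zero' (Eventually.of_forall fun n => by positivity) ?_
    tendsto_one_div_atTop_nhds_zero_nat
  filter_upwards [eventually_ge_atTop 1] with n hn
  have hbd : (latBoundary (centeredSquare n)).card ≤ 4 * n + 1 :=
    (card_latBoundary_Zrect_le (2 * n) (2 * n) _).trans (by omega)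
  have hbd_real : ((latBoundary (centeredSquare n)).card : ℝ) ≤ 4 * n + 1 := by exact_mod_cast hbd
  have hcard : (centeredSquare n).card = (2 * n + 1) * (2 * n + 1) := card_Zrect _ _ _
  have hn : (1 : ℝ) ≤ n := by exact_mod_cast hn
  rw [hcard, div_le_div_iff₀ (by positivity) (by positivity)]
  push_cast
  nlinarith

lemma rectEntropy_le_entropyAlong_centeredSquare (hne : U.Nonempty) (hinv : IsShiftInvariant U) :
    rectEntropy U ≤ entropyAlong U centeredSquare :=
  le_limsup_of_frequently_le
    (Frequently.of_forall fun n => rectEntropy_le_patternEntropy_Zrect hne hinv (2 * n) (2 * n) _)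
    (isBoundedUnder_of ⟨_, fun _ => patternEntropy_le_log_card hne _⟩)

end MainInequalities

theorem rectEntropy_eq_sSup_genuinely_two_dimensional_general {A : Type*} [Fintype A]
    [TopologicalSpace A] (U : Set ((ℤ × ℤ) → A)) (hU : IsShiftSpace U) :
    rectEntropy U = sSup {x : ℝ | ∃ Ω : ℕ → Finset (ℤ × ℤ), IsExpandingSystem Ω ∧
      Filter.limsup
        (fun n => ((latBoundary (Ω n)).card : ℝ) / ((Ω n).card : ℝ)) Filter.atTop = 0 ∧
      x = entropyAlong U Ω} := by
  obtain ⟨hne, -, hinv⟩ := hU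
  have hsquare := tendsto_card_latBoundary_div_card_centeredSquare.limsup_eq
  refine Eq.symm (IsGreatest.csSup_eq ⟨?_, ?_⟩)
  · refine ⟨centeredSquare, isExpandingSystem_centeredSquare, hsquare, ?_⟩
    exact le_antisymm (rectEntropy_le_entropyAlong_centeredSquare hne hinv)
      (entropyAlong_le_rectEntropy hne hinv hsquare)
  · rintro _ ⟨Ω, -, hΩ, rfl⟩
    exact entropyAlong_le_rectEntropy hne hinv hΩ

/-- (1.21): the rectangular entropy equals the genuinely two-dimensional
entropy, the supremum of `h_Ω(U)` over all genuinely two-dimensional expanding systems. -/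
theorem rectEntropy_eq_sSup_genuinely_two_dimensional {A : Type*} [Fintype A]
    [TopologicalSpace A] [DiscreteTopology A] (hcard : 2 ≤ Fintype.card A)
    (U : Set ((ℤ × ℤ) → A)) (hU : IsShiftSpace U) :
    rectEntropy U = sSup {x : ℝ | ∃ Ω : ℕ → Finset (ℤ × ℤ), IsExpandingSystem Ω ∧
      Filter.limsup
        (fun n => ((latBoundary (Ω n)).card : ℝ) / ((Ω n).card : ℝ)) Filter.atTop = 0 ∧
      x = entropyAlong U Ω} :=
  rectEntropy_eq_sSup_genuinely_two_dimensional_general U hU
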